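/- arXiv:1209.3430 — 2 statements merged into one kernel-verified Lean document; each statement's English description precedes it below -/
import Mathlib

section
/- Let ε = (ε¹₁,ε¹₂,ε²₁,ε²₂) ∈ [0,1/2]⁴. Then the following are equivalent: (a) for every p ∈ [0,1/2]⁴, one has max S₁p ≤ √2/2 if and only if (p, ε) ∈ ELFP; (b) (3 − √2)/2 ∈ S₀ε and max S₁ε ≤ 1/2. (This characterizes the set Equi for the quantum ('quant') constraint.) -/
open Finset

/-- The signed sum `±(x₁₁−¼) ± (x₁₂−¼) ± (x₂₁−¼) ± (x₂₂−¼)` over the four components of `x`,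
with a `+` sign exactly where the sign choice `s` is `true`. -/
noncomputable def Sval (x : Fin 2 → Fin 2 → ℝ) (s : Fin 2 → Fin 2 → Bool) : ℝ :=
  ∑ i : Fin 2, ∑ j : Fin 2, (if s i j then (1 : ℝ) else -1) * (x i j - 1 / 4)

/-- The number of `+` signs in a sign choice. -/
def plusCount (s : Fin 2 → Fin 2 → Bool) : ℕ :=
  (Finset.univ.filter fun ij : Fin 2 × Fin 2 => s ij.1 ij.2 = true).card

/-- `max Sx`: the maximum of the signed sums over all 16 sign choices. -/
noncomputable def maxS (x : Fin 2 → Fin 2 → ℝ) : ℝ :=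
  Finset.univ.sup' Finset.univ_nonempty (Sval x)

/-- `max S₀x`: the maximum over sign choices with an even number of `+` signs. -/
noncomputable def maxS0 (x : Fin 2 → Fin 2 → ℝ) : ℝ :=
  (Finset.univ.filter fun s : Fin 2 → Fin 2 → Bool => Even (plusCount s)).sup'
    ⟨fun _ _ => false, by decide⟩ (Sval x)

/-- `max S₁x`: the maximum over sign choices with an odd number of `+` signs. -/
noncomputable def maxS1 (x : Fin 2 → Fin 2 → ℝ) : ℝ :=
  (Finset.univ.filter fun s : Fin 2 → Fin 2 → Bool => ¬ Even (plusCount s)).sup'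
    ⟨fun i j => i == 0 && j == 0, by decide⟩ (Sval x)

/-- `r ∈ S₀x`: `r` is one of the signed sums with an even number of `+` signs. -/
def memS0 (x : Fin 2 → Fin 2 → ℝ) (r : ℝ) : Prop :=
  ∃ s : Fin 2 → Fin 2 → Bool, Even (plusCount s) ∧ Sval x s = r

/-- The Extended Linear Feasibility Polytope: `(p, ε) ∈ ELFP` iff there is a joint
distribution on `({−1,+1})⁸` — encoded as `Fin 2 → Fin 2 → Fin 2 → Bool`, `h k i j` being the
value of `Hᵏᵢⱼ` (`true` standing for `+1`) — with uniform ±1 one-dimensional marginals,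
`Pr[H¹ᵢⱼ = +1, H²ᵢⱼ = +1] = p i j`, `Pr[H¹ᵢ₁ = +1, H¹ᵢ₂ = +1] = ε 0 i`, and
`Pr[H²₁ⱼ = +1, H²₂ⱼ = +1] = ε 1 j`. -/
def ELFP (p ε : Fin 2 → Fin 2 → ℝ) : Prop :=
  ∃ μ : (Fin 2 → Fin 2 → Fin 2 → Bool) → ℝ,
    (∀ h, 0 ≤ μ h) ∧
    (∑ h : Fin 2 → Fin 2 → Fin 2 → Bool, μ h = 1) ∧
    (∀ k i j : Fin 2,
      ∑ h ∈ Finset.univ.filter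
          (fun h : Fin 2 → Fin 2 → Fin 2 → Bool => h k i j = true), μ h = 1 / 2) ∧
    (∀ i j : Fin 2,
      ∑ h ∈ Finset.univ.filter
          (fun h : Fin 2 → Fin 2 → Fin 2 → Bool => h 0 i j = true ∧ h 1 i j = true), μ h
        = p i j) ∧
    (∀ i : Fin 2,
      ∑ h ∈ Finset.univ.filter
          (fun h : Fin 2 → Fin 2 → Fin 2 → Bool => h 0 i 0 = true ∧ h 0 i 1 = true), μ h
        = ε 0 i) ∧
    (∀ j : Fin 2,
      ∑ h ∈ Finset.univ.filter
          (fun h : Fin 2 → Fin 2 → Fin 2 → Bool => h 1 0 j = true ∧ h 1 1 j = true), μ h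
        = ε 1 j)

/-!
The eight variables `Hᵏᵢⱼ` form a cycle in which consecutive variables are tied by the eight
prescribed pair probabilities. Under uniform marginals, `Pr[both ends of an edge are +1] = w`
says that the edge is cut with probability `1 - 2w`; the cut set of a labelling of a cycle is
even, and every even edge set is the cut set of exactly two (complementary) labellings. So
`(p, ε) ∈ ELFP` iff the cut vector lies in the parity polytope, which Jeroslow's odd-set
inequalities describe: by separation, since a linear functional is maximised over the even sets
by its positive support, corrected if need be by one element of least weight. Written out, these
inequalities read `max S₀p + max S₁ε ≤ 3/2` and `max S₁p + max S₀ε ≤ 3/2`. Testing (a) on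
`p ≡ 1/2` and on `p = (1/4 + c, 1/4 + c, 1/4 + c, 1/4)` forces `max S₁ε ≤ 1/2` and
`max S₀ε = (3 - √2)/2`. Finally, a value `r ∈ S₀ε` with `max S₁ε ≤ r` is `max S₀ε`: flipping any
one sign of the even choice attaining `r` gives an odd choice, so all its terms are nonnegative.
-/

section Prob

variable {Ω : Type*} [Fintype Ω]

def prob (μ : Ω → ℝ) (P : Ω → Prop) [DecidablePred P] : ℝ :=
  ∑ ω ∈ univ.filter P, μ ω

theorem prob_congr (μ : Ω → ℝ) {P Q : Ω → Prop} [DecidablePred P] [DecidablePred Q]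
    (h : ∀ ω, P ω ↔ Q ω) : prob μ P = prob μ Q := by
  simp only [prob, filter_congr fun ω _ => h ω]

theorem prob_true (μ : Ω → ℝ) : prob μ (fun _ => True) = ∑ ω, μ ω := by
  simp [prob]

theorem prob_map {α : Type*} [Fintype α] [DecidableEq Ω] (ν : α → ℝ) (f : α → Ω)
    (P : Ω → Prop) [DecidablePred P] :
    prob (fun ω => prob ν fun a => f a = ω) P = prob ν fun a => P (f a) := by
  simp only [prob]
  rw [sum_fiberwise_eq_sum_filter]
  simp

theorem prob_comp_equiv {α : Type*} [Fintype α] (μ : Ω → ℝ) (e : α ≃ Ω) (P : α → Prop)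
    [DecidablePred P] : prob (μ ∘ e) P = prob μ fun ω => P (e.symm ω) := by
  simp only [prob, sum_filter, Function.comp]
  rw [← e.sum_comp]
  simp

theorem sum_prob_mem {ι : Type*} [DecidableEq ι] (μ : Ω → ℝ) (T : Ω → Finset ι)
    (F : Finset ι) : ∑ m ∈ F, prob μ (fun ω => m ∈ T ω) = ∑ ω, μ ω * #(F ∩ T ω) := by
  simp only [prob, sum_filter]
  rw [sum_comm]
  simp [mul_comm]

theorem two_mul_prob_and (μ : Ω → ℝ) (a b : Ω → Bool) :
    2 * prob μ (fun ω => a ω ∧ b ω) =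
      prob μ (fun ω => a ω) + prob μ (fun ω => b ω) - prob μ (fun ω => a ω ≠ b ω) := by
  simp only [prob, sum_filter, mul_sum, ← sum_add_distrib, ← sum_sub_distrib]
  refine sum_congr rfl fun ω _ => ?_
  cases a ω <;> cases b ω <;> simp [two_mul]

end Prob

section ParityPolytope

variable {ι : Type*} [Fintype ι]

theorem sum_mul_le_sum_filter_pos {q : ι → ℝ} (h0 : ∀ m, 0 ≤ q m) (h1 : ∀ m, q m ≤ 1)
    (c : ι → ℝ) : ∑ m, c m * q m ≤ ∑ m ∈ univ.filter fun m => 0 < c m, c m := by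
  rw [sum_filter]
  refine sum_le_sum fun m _ => ?_
  split_ifs with hm
  · nlinarith [h1 m]
  · nlinarith [h0 m]

variable [DecidableEq ι]

theorem sum_ite_mem_add_sum_compl (F : Finset ι) (f g : ι → ℝ) :
    ∑ m, (if m ∈ F then f m else g m) = ∑ m ∈ F, f m + ∑ m ∈ Fᶜ, g m := by
  rw [sum_ite, filter_mem_eq_inter, univ_inter, compl_eq_univ_sdiff, sdiff_eq_filter]

-- Jeroslow: with `0 ≤ q ≤ 1`, these describe the convex hull of the indicators of even sets.
def OddSetIneqs (q : ι → ℝ) : Prop :=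
  ∀ F : Finset ι, Odd #F → ∑ m ∈ F, q m - ∑ m ∈ Fᶜ, q m ≤ #F - 1

theorem exists_even_card_sum_ge {q : ι → ℝ} (h0 : ∀ m, 0 ≤ q m) (h1 : ∀ m, q m ≤ 1)
    (hq : OddSetIneqs q) (c : ι → ℝ) :
    ∃ S : Finset ι, Even #S ∧ ∑ m, c m * q m ≤ ∑ m ∈ S, c m := by
  set P := univ.filter fun m => 0 < c m
  by_cases hP : Even #P
  · exact ⟨P, hP, sum_mul_le_sum_filter_pos h0 h1 c⟩
  have hPodd : Odd #P := Nat.not_even_iff_odd.1 hP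
  obtain ⟨i₀, -, hi₀⟩ := exists_min_image univ (fun m => |c m|)
    (univ_nonempty_iff.2 ⟨(card_pos.1 hPodd.pos).choose⟩)
  -- moving `i₀` in or out of `P` repairs the parity at the least possible cost `|c i₀|`
  refine ⟨if i₀ ∈ P then P.erase i₀ else insert i₀ P, ?_, ?_⟩
  · split_ifs with h
    · rw [card_erase_of_mem h]; exact Nat.Odd.sub_odd hPodd odd_one
    · rw [card_insert_of_notMem h]; exact hPodd.add_one
  have hsum : ∑ m ∈ (if i₀ ∈ P then P.erase i₀ else insert i₀ P), c m
      = ∑ m ∈ P, c m - |c i₀| := by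
    split_ifs with h
    · rw [sum_erase_eq_sub h, abs_of_pos (mem_filter.1 h).2]
    · rw [sum_insert h, abs_of_nonpos (by simpa [P] using h)]; ring
  have hpt (m : ι) : c m * q m ≤
      (if m ∈ P then c m - |c i₀| * (1 - q m) else -(|c i₀| * q m)) := by
    have hmin := hi₀ m (mem_univ m)
    split_ifs with hm
    · have hc := (mem_filter.1 hm).2
      rw [abs_of_pos hc] at hmin
      nlinarith [h1 m]
    · have hc : c m ≤ 0 := by simpa [P] using hm
      rw [abs_of_nonpos hc] at hmin
      nlinarith [h0 m]
  have hslack := hq P hPodd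
  calc ∑ m, c m * q m
      ≤ ∑ m, (if m ∈ P then c m - |c i₀| * (1 - q m) else -(|c i₀| * q m)) :=
        sum_le_sum fun m _ => hpt m
    _ = ∑ m ∈ P, c m - |c i₀| * (#P - (∑ m ∈ P, q m - ∑ m ∈ Pᶜ, q m)) := by
      rw [sum_ite_mem_add_sum_compl, sum_sub_distrib, sum_neg_distrib, ← mul_sum, ← mul_sum,
        sum_sub_distrib, sum_const, nsmul_one]
      ring
    _ ≤ ∑ m ∈ P, c m - |c i₀| := by nlinarith [abs_nonneg (c i₀)]
    _ = _ := hsum.symm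

theorem exists_weights_of_oddSetIneqs {q : ι → ℝ} (h0 : ∀ m, 0 ≤ q m) (h1 : ∀ m, q m ≤ 1)
    (hq : OddSetIneqs q) :
    ∃ w : {S : Finset ι // Even #S} → ℝ,
      (∀ S, 0 ≤ w S) ∧ ∑ S, w S = 1 ∧ ∀ m, prob w (fun S => m ∈ S.1) = q m := by
  let v : {S : Finset ι // Even #S} → ι → ℝ := fun S m => if m ∈ S.1 then 1 else 0
  let A := Fintype.linearCombination ℝ v
  suffices hK : q ∈ A '' stdSimplex ℝ _ by
    obtain ⟨w, ⟨hw0, hw1⟩, rfl⟩ := hK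
    refine ⟨w, hw0, hw1, fun m => ?_⟩
    simp [A, Fintype.linearCombination_apply, v, prob, sum_filter]
  by_contra hK
  obtain ⟨f, u, hfq, hfK⟩ := geometric_hahn_banach_point_closed
    ((convex_stdSimplex ℝ _).linear_image A)
    ((isCompact_stdSimplex ℝ _).image A.continuous_of_finiteDimensional).isClosed hK
  set c : ι → ℝ := fun m => -f fun j => if m = j then 1 else 0
  have hf (y : ι → ℝ) : f y = -∑ m, c m * y m := by
    simpa [c, mul_comm] using LinearMap.pi_apply_eq_sum_univ f.toLinearMap y
  obtain ⟨S, hS, hle⟩ := exists_even_card_sum_ge h0 h1 hq c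
  have hvS := hfK (v ⟨S, hS⟩) ⟨Pi.single ⟨S, hS⟩ 1, single_mem_stdSimplex ℝ _, by simp [A]⟩
  simp only [hf, v, mul_ite, mul_one, mul_zero, sum_ite_mem, univ_inter] at hvS hfq
  linarith

end ParityPolytope

theorem Finset.card_inter_add_one_le_of_odd_of_even {α : Type*} [DecidableEq α]
    {F S : Finset α} (hF : Odd #F) (hS : Even #S) : #(F ∩ S) + 1 ≤ #F + #(S \ F) := by
  by_cases hFS : F ⊆ S
  · have hne : (S \ F).Nonempty := by
      rw [sdiff_nonempty]
      rintro hSF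
      rw [subset_antisymm hSF hFS] at hS
      exact Nat.not_even_iff_odd.2 hF hS
    rw [inter_eq_left.2 hFS]
    exact Nat.add_le_add_left hne.card_pos _
  · have := card_lt_card
      (inter_subset_left.ssubset_of_not_subset fun h => hFS (h.trans inter_subset_right))
    omega

theorem Fin.val_add_one_eq_ite {n : ℕ} [NeZero n] (m : Fin n) :
    ((m + 1 : Fin n) : ℕ) = if m.val + 1 = n then 0 else m.val + 1 := by
  rw [Fin.val_add, Fin.val_one', Nat.add_mod_mod]
  split_ifs with h
  · rw [h, Nat.mod_self]
  · exact Nat.mod_eq_of_lt (by omega)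

section Cycle

variable {n : ℕ} [NeZero n]

def cutSet (L : Fin n → Bool) : Finset (Fin n) := univ.filter fun m => L m ≠ L (m + 1)

def cutProb (μ : (Fin n → Bool) → ℝ) (m : Fin n) : ℝ := prob μ fun L => m ∈ cutSet L

theorem even_card_cutSet (L : Fin n → Bool) : Even #(cutSet L) := by
  -- mod 2, edge `m` is cut iff `L m + L (m + 1) = 1`, and every vertex lies on two edges
  let f : Bool → ZMod 2 := fun b => if b then 1 else 0
  have hpt (a b : Bool) : ((if a ≠ b then 1 else 0 : ℕ) : ZMod 2) = f a + f b := by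
    revert a b; decide
  have hrot : ∑ m, f (L (m + 1)) = ∑ m, f (L m) :=
    Equiv.sum_comp (Equiv.addRight (1 : Fin n)) fun m => f (L m)
  rw [← ZMod.natCast_eq_zero_iff_even, cutSet, card_filter, Nat.cast_sum]
  simp_rw [hpt, sum_add_distrib, hrot]
  exact CharTwo.add_self_eq_zero _

theorem exists_cutSet_eq {S : Finset (Fin n)} (hS : Even #S) : ∃ L, cutSet L = S := by
  -- label each vertex by the parity of the number of edges of `S` before it
  let c : ℕ → ℕ := fun k => #(S.filter fun j => j.val < k)
  have hc_succ (m : Fin n) : c (m.val + 1) = c m + if m ∈ S then 1 else 0 := by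
    have : S.filter (fun j => j.val < m.val + 1) =
        (S.filter fun j => j.val < m.val) ∪ S.filter fun j => j = m := by
      ext j
      by_cases hj : j ∈ S <;>
        simp only [mem_union, mem_filter, hj, true_and, false_and, or_self, Fin.ext_iff]
      omega
    simp only [c, this, filter_eq']
    split_ifs <;> simp
  have hc_wrap (m : Fin n) : Even (c (m + 1 : Fin n)) ↔ Even (c (m.val + 1)) := by
    rw [Fin.val_add_one_eq_ite]
    split_ifs with h
    · simp only [c, h, filter_true_of_mem fun (j : Fin n) _ => j.isLt]
      simp [hS]
    · rfl
  refine ⟨fun m => decide (Even (c m)), ?_⟩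
  ext m
  simp only [cutSet, mem_filter, mem_univ, true_and, ne_eq, decide_eq_decide, hc_wrap, hc_succ]
  split_ifs with hm <;> simp only [add_zero, Nat.even_add_one] <;> tauto

theorem oddSetIneqs_cutProb {μ : (Fin n → Bool) → ℝ} (hμ0 : ∀ L, 0 ≤ μ L)
    (hμ1 : ∑ L, μ L = 1) : OddSetIneqs (cutProb μ) := by
  intro F hF
  have hpt (L : Fin n → Bool) :
      μ L * #(F ∩ cutSet L) - μ L * #(Fᶜ ∩ cutSet L) ≤ μ L * (#F - 1) := by
    have := card_inter_add_one_le_of_odd_of_even hF (even_card_cutSet L)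
    rw [← mul_sub, inter_comm Fᶜ, ← sdiff_eq_inter_compl]
    refine mul_le_mul_of_nonneg_left ?_ (hμ0 L)
    have : (#(F ∩ cutSet L) : ℝ) + 1 ≤ #F + #(cutSet L \ F) := by exact_mod_cast this
    linarith
  simp only [cutProb, sum_prob_mem, ← sum_sub_distrib]
  calc _ ≤ ∑ L, μ L * (#F - 1) := sum_le_sum fun L _ => hpt L
    _ = _ := by rw [← sum_mul, hμ1, one_mul]

theorem exists_cutProb_eq {x : Fin n → ℝ} (h0 : ∀ m, 0 ≤ x m) (h1 : ∀ m, x m ≤ 1)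
    (hx : OddSetIneqs x) :
    ∃ μ : (Fin n → Bool) → ℝ, (∀ L, 0 ≤ μ L) ∧ ∑ L, μ L = 1 ∧
      (∀ m, prob μ (fun L => L m) = 1 / 2) ∧ cutProb μ = x := by
  obtain ⟨w, hw0, hw1, hwx⟩ := exists_weights_of_oddSetIneqs h0 h1 hx
  choose lab hlab using fun S : {S : Finset (Fin n) // Even #S} => exists_cutSet_eq S.2
  -- draw an even cut set `S` with probability `w S`, then one of its two labellings uniformly
  let ν : {S : Finset (Fin n) // Even #S} × Bool → ℝ := fun a => w a.1 / 2
  let f : {S : Finset (Fin n) // Even #S} × Bool → Fin n → Bool := fun a m => xor a.2 (lab a.1 m)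
  have hν (P : {S : Finset (Fin n) // Even #S} × Bool → Prop) [DecidablePred P] :
      prob ν P =
        ∑ S, ((if P (S, true) then w S / 2 else 0) + if P (S, false) then w S / 2 else 0) := by
    simp only [prob, sum_filter, Fintype.sum_prod_type, Fintype.sum_bool, ν]
  refine ⟨fun L => prob ν fun a => f a = L, fun L => sum_nonneg fun a _ => div_nonneg (hw0 a.1)
    zero_le_two, ?_, fun m => ?_, funext fun m => ?_⟩
  · rw [← prob_true, prob_map, hν]
    simp [← hw1]
  · rw [prob_map, hν]
    refine (sum_congr rfl fun S _ => ?_).trans (by rw [← sum_div, hw1])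
    by_cases h : lab S m <;> simp [f, h]
  · have hcut (a : {S : Finset (Fin n) // Even #S} × Bool) : m ∈ cutSet (f a) ↔ m ∈ a.1.1 := by
      simp [f, ← hlab a.1, cutSet]
    rw [cutProb, prob_map, ← hwx m, prob_congr ν hcut, hν]
    simp only [prob, sum_filter]
    exact sum_congr rfl fun S _ => by split_ifs <;> ring

end Cycle

section CycleLaw

theorem oddSetIneqs_one_sub_two_mul_iff {ι : Type*} [Fintype ι] [DecidableEq ι] (w : ι → ℝ) :
    OddSetIneqs (fun m => 1 - 2 * w m) ↔ ∀ F : Finset ι, Odd #F →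
      ∑ m, (if m ∈ F then -1 else 1) * (w m - 1 / 4) ≤ (Fintype.card ι - 2) / 4 := by
  refine forall₂_congr fun F _ => ?_
  have hcard : (#F : ℝ) + #Fᶜ = Fintype.card ι := by exact_mod_cast card_add_card_compl F
  simp only [ite_mul, neg_one_mul, one_mul, sum_ite_mem_add_sum_compl, sum_neg_distrib,
    sum_sub_distrib, sum_const, nsmul_eq_mul, ← mul_sum, mul_one]
  constructor <;> intro h <;> linarith

variable {n : ℕ} [NeZero n]

def IsCycleLaw (μ : (Fin n → Bool) → ℝ) (w : Fin n → ℝ) : Prop :=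
  (∀ L, 0 ≤ μ L) ∧ ∑ L, μ L = 1 ∧ (∀ m, prob μ (fun L => L m) = 1 / 2) ∧
    ∀ m, prob μ (fun L => L m ∧ L (m + 1)) = w m

theorem exists_isCycleLaw_iff {w : Fin n → ℝ} (h0 : ∀ m, 0 ≤ w m) (h1 : ∀ m, w m ≤ 1 / 2) :
    (∃ μ, IsCycleLaw μ w) ↔ ∀ F : Finset (Fin n), Odd #F →
      ∑ m, (if m ∈ F then -1 else 1) * (w m - 1 / 4) ≤ (n - 2) / 4 := by
  have hodd := oddSetIneqs_one_sub_two_mul_iff w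
  rw [Fintype.card_fin] at hodd
  rw [← hodd]
  have hcut {μ : (Fin n → Bool) → ℝ} (hμ : ∀ m, prob μ (fun L => L m) = 1 / 2) (m : Fin n) :
      prob μ (fun L => L m ∧ L (m + 1)) = w m ↔ cutProb μ m = 1 - 2 * w m := by
    have := two_mul_prob_and μ (fun L => L m) (fun L => L (m + 1))
    rw [hμ, hμ, prob_congr μ fun L => show L m ≠ L (m + 1) ↔ m ∈ cutSet L by simp [cutSet]]
      at this
    rw [cutProb]
    constructor <;> intro h <;> linarith
  constructor
  · rintro ⟨μ, hμ0, hμ1, hμ, hw⟩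
    exact funext (fun m => (hcut hμ m).1 (hw m)) ▸ oddSetIneqs_cutProb hμ0 hμ1
  · intro hx
    obtain ⟨μ, hμ0, hμ1, hμ, hx⟩ := exists_cutProb_eq (fun m => by linarith [h1 m])
      (fun m => by linarith [h0 m]) hx
    exact ⟨μ, hμ0, hμ1, hμ, fun m => (hcut hμ m).2 (congrFun hx m)⟩

end CycleLaw

-- Around the cycle `H¹₁₁ – H²₁₁ – H²₂₁ – H¹₂₁ – H¹₂₂ – H²₂₂ – H²₁₂ – H¹₁₂ – H¹₁₁` consecutive
-- variables are tied by `p₁₁, ε²₁, p₂₁, ε¹₂, p₂₂, ε²₂, p₁₂, ε¹₁`; `Hᵏᵢⱼ` is `h (k-1) (i-1) (j-1)`.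
def cycleEquiv : (Fin 2 → Fin 2 → Fin 2 → Bool) ≃ (Fin 8 → Bool) where
  toFun h := ![h 0 0 0, h 1 0 0, h 1 1 0, h 0 1 0, h 0 1 1, h 1 1 1, h 1 0 1, h 0 0 1]
  invFun L := ![![![L 0, L 7], ![L 3, L 4]], ![![L 1, L 6], ![L 2, L 5]]]
  left_inv h := by funext k i j; fin_cases k <;> fin_cases i <;> fin_cases j <;> rfl
  right_inv L := by funext m; fin_cases m <;> rfl

def cycleWeight (p ε : Fin 2 → Fin 2 → ℝ) : Fin 8 → ℝ :=
  ![p 0 0, ε 1 0, p 1 0, ε 0 1, p 1 1, ε 1 1, p 0 1, ε 0 0]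

theorem isCycleLaw_of_ELFP {p ε : Fin 2 → Fin 2 → ℝ} {μ : (Fin 2 → Fin 2 → Fin 2 → Bool) → ℝ}
    (h0 : ∀ h, 0 ≤ μ h) (h1 : ∑ h, μ h = 1)
    (hhalf : ∀ k i j, prob μ (fun h => h k i j) = 1 / 2)
    (hp : ∀ i j, prob μ (fun h => h 0 i j ∧ h 1 i j) = p i j)
    (hε₀ : ∀ i, prob μ (fun h => h 0 i 0 ∧ h 0 i 1) = ε 0 i)
    (hε₁ : ∀ j, prob μ (fun h => h 1 0 j ∧ h 1 1 j) = ε 1 j) :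
    IsCycleLaw (μ ∘ cycleEquiv.symm) (cycleWeight p ε) := by
  have hswap {P Q : (Fin 2 → Fin 2 → Fin 2 → Bool) → Prop} [DecidablePred P] [DecidablePred Q]
      {r : ℝ} (h : prob μ (fun h => P h ∧ Q h) = r) : prob μ (fun h => Q h ∧ P h) = r :=
    (prob_congr μ fun _ => and_comm).trans h
  refine ⟨fun L => h0 _, by rw [← h1]; exact cycleEquiv.symm.sum_comp μ, fun m => ?_,
    fun m => ?_⟩ <;> rw [prob_comp_equiv, Equiv.symm_symm] <;> fin_cases m
  exacts [hhalf 0 0 0, hhalf 1 0 0, hhalf 1 1 0, hhalf 0 1 0, hhalf 0 1 1, hhalf 1 1 1,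
    hhalf 1 0 1, hhalf 0 0 1, hp 0 0, hε₁ 0, hswap (hp 1 0), hε₀ 1, hp 1 1, hswap (hε₁ 1),
    hswap (hp 0 1), hswap (hε₀ 0)]

theorem ELFP_of_isCycleLaw {p ε : Fin 2 → Fin 2 → ℝ} {ν : (Fin 8 → Bool) → ℝ}
    (h : IsCycleLaw ν (cycleWeight p ε)) : ELFP p ε := by
  obtain ⟨h0, h1, hhalf, hw⟩ := h
  have hw' (m : Fin 8) : prob ν (fun L => L (m + 1) ∧ L m) = cycleWeight p ε m :=
    (prob_congr ν fun _ => and_comm).trans (hw m)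
  refine ⟨ν ∘ cycleEquiv, fun h => h0 _, by rw [← h1]; exact cycleEquiv.sum_comp ν,
    fun k i j => ?_, fun i j => ?_, fun i => ?_, fun j => ?_⟩ <;>
    change prob (ν ∘ cycleEquiv) _ = _ <;> rw [prob_comp_equiv]
  · fin_cases k <;> fin_cases i <;> fin_cases j
    exacts [hhalf 0, hhalf 7, hhalf 3, hhalf 4, hhalf 1, hhalf 6, hhalf 2, hhalf 5]
  · fin_cases i <;> fin_cases j
    exacts [hw 0, hw' 6, hw' 2, hw 4]
  · fin_cases i
    exacts [hw' 7, hw 3]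
  · fin_cases j
    exacts [hw 1, hw' 5]

theorem ELFP_iff_exists_isCycleLaw (p ε : Fin 2 → Fin 2 → ℝ) :
    ELFP p ε ↔ ∃ μ, IsCycleLaw μ (cycleWeight p ε) :=
  ⟨fun ⟨_, h0, h1, hhalf, hp, hε₀, hε₁⟩ => ⟨_, isCycleLaw_of_ELFP h0 h1 hhalf hp hε₀ hε₁⟩,
    fun ⟨_, h⟩ => ELFP_of_isCycleLaw h⟩

-- The edges carrying a `-` sign in `Sval p s + Sval ε t`, numbered as in `cycleWeight`.
def cycleNegSet (s t : Fin 2 → Fin 2 → Bool) : Finset (Fin 8) :=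
  univ.filter fun m => ![s 0 0, t 1 0, s 1 0, t 0 1, s 1 1, t 1 1, s 0 1, t 0 0] m = false

theorem sum_ite_mem_cycleNegSet (p ε : Fin 2 → Fin 2 → ℝ) (s t : Fin 2 → Fin 2 → Bool) :
    ∑ m, (if m ∈ cycleNegSet s t then -1 else 1) * (cycleWeight p ε m - 1 / 4) =
      Sval p s + Sval ε t := by
  have hsgn (b : Bool) : (if b = false then (-1 : ℝ) else 1) = if b then 1 else -1 := by
    cases b <;> simp
  -- in `cond` form no `Decidable` instance goes stale when the vector entries are evaluated
  simp only [cycleNegSet, mem_filter, mem_univ, true_and, hsgn, ← Bool.cond_eq_ite,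
    Fin.sum_univ_eight, Matrix.cons_val, Sval, Fin.sum_univ_two, cycleWeight]
  ring

theorem odd_card_cycleNegSet_iff (s t : Fin 2 → Fin 2 → Bool) :
    Odd #(cycleNegSet s t) ↔ ¬Even (plusCount s + plusCount t) := by
  revert s t
  decide

theorem exists_cycleNegSet_eq (F : Finset (Fin 8)) : ∃ s t, cycleNegSet s t = F :=
  ⟨fun i j => decide (![![0, 6], ![2, 4]] i j ∉ F),
    fun k i => decide (![![7, 3], ![1, 5]] k i ∉ F),
    by ext m; fin_cases m <;> simp [cycleNegSet]⟩

theorem ELFP_iff_signs {p ε : Fin 2 → Fin 2 → ℝ} (hp : ∀ i j, p i j ∈ Set.Icc (0 : ℝ) (1 / 2))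
    (hε : ∀ k i, ε k i ∈ Set.Icc (0 : ℝ) (1 / 2)) :
    ELFP p ε ↔ ∀ s t, ¬Even (plusCount s + plusCount t) → Sval p s + Sval ε t ≤ 3 / 2 := by
  have hw (m : Fin 8) : cycleWeight p ε m ∈ Set.Icc (0 : ℝ) (1 / 2) := by
    fin_cases m
    exacts [hp 0 0, hε 1 0, hp 1 0, hε 0 1, hp 1 1, hε 1 1, hp 0 1, hε 0 0]
  rw [ELFP_iff_exists_isCycleLaw, exists_isCycleLaw_iff (fun m => (hw m).1) fun m => (hw m).2]
  norm_num only
  constructor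
  · intro h s t hst
    simpa only [sum_ite_mem_cycleNegSet] using h _ ((odd_card_cycleNegSet_iff s t).2 hst)
  · intro h F hF
    obtain ⟨s, t, rfl⟩ := exists_cycleNegSet_eq F
    rw [sum_ite_mem_cycleNegSet]
    exact h s t ((odd_card_cycleNegSet_iff s t).1 hF)

theorem Finset.sup'_add_sup'_le_iff {α β : Type*} [AddCommGroup β] [LinearOrder β]
    [IsOrderedAddMonoid β] {s t : Finset α} (hs : s.Nonempty) (ht : t.Nonempty) (f g : α → β)
    (c : β) : s.sup' hs f + t.sup' ht g ≤ c ↔ ∀ a ∈ s, ∀ b ∈ t, f a + g b ≤ c := by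
  rw [← le_sub_iff_add_le, sup'_le_iff]
  refine forall₂_congr fun a _ => ?_
  rw [le_sub_iff_add_le', ← le_sub_iff_add_le, sup'_le_iff]
  exact forall₂_congr fun b _ => le_sub_iff_add_le'

theorem le_maxS0 (x : Fin 2 → Fin 2 → ℝ) {s : Fin 2 → Fin 2 → Bool} (hs : Even (plusCount s)) :
    Sval x s ≤ maxS0 x :=
  le_sup' (Sval x) (mem_filter.2 ⟨mem_univ s, hs⟩)

theorem le_maxS1 (x : Fin 2 → Fin 2 → ℝ) {s : Fin 2 → Fin 2 → Bool}
    (hs : ¬Even (plusCount s)) : Sval x s ≤ maxS1 x :=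
  le_sup' (Sval x) (mem_filter.2 ⟨mem_univ s, hs⟩)

theorem maxS0_le_iff {x : Fin 2 → Fin 2 → ℝ} {c : ℝ} :
    maxS0 x ≤ c ↔ ∀ s, Even (plusCount s) → Sval x s ≤ c :=
  (sup'_le_iff _ _).trans (by simp)

theorem maxS1_le_iff {x : Fin 2 → Fin 2 → ℝ} {c : ℝ} :
    maxS1 x ≤ c ↔ ∀ s, ¬Even (plusCount s) → Sval x s ≤ c :=
  (sup'_le_iff _ _).trans (by simp)

theorem maxS0_add_maxS1_le_iff {x y : Fin 2 → Fin 2 → ℝ} {c : ℝ} :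
    maxS0 x + maxS1 y ≤ c ↔
      ∀ s, Even (plusCount s) → ∀ t, ¬Even (plusCount t) → Sval x s + Sval y t ≤ c :=
  (sup'_add_sup'_le_iff _ _ _ _ _).trans (by simp)

theorem maxS1_add_maxS0_le_iff {x y : Fin 2 → Fin 2 → ℝ} {c : ℝ} :
    maxS1 x + maxS0 y ≤ c ↔
      ∀ s, ¬Even (plusCount s) → ∀ t, Even (plusCount t) → Sval x s + Sval y t ≤ c :=
  (sup'_add_sup'_le_iff _ _ _ _ _).trans (by simp)

theorem memS0_maxS0 (x : Fin 2 → Fin 2 → ℝ) : memS0 x (maxS0 x) := by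
  obtain ⟨s, hs, h⟩ := exists_mem_eq_sup' (s := univ.filter fun s => Even (plusCount s))
    ⟨fun _ _ => false, by decide⟩ (Sval x)
  exact ⟨s, (mem_filter.1 hs).2, h.symm⟩

theorem ELFP_iff_maxS {p ε : Fin 2 → Fin 2 → ℝ} (hp : ∀ i j, p i j ∈ Set.Icc (0 : ℝ) (1 / 2))
    (hε : ∀ k i, ε k i ∈ Set.Icc (0 : ℝ) (1 / 2)) :
    ELFP p ε ↔ maxS0 p + maxS1 ε ≤ 3 / 2 ∧ maxS1 p + maxS0 ε ≤ 3 / 2 := by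
  rw [ELFP_iff_signs hp hε, maxS0_add_maxS1_le_iff, maxS1_add_maxS0_le_iff]
  simp only [Nat.even_add]
  constructor
  · intro h
    exact ⟨fun s hs t ht => h s t (by tauto), fun s hs t ht => h s t (by tauto)⟩
  · rintro ⟨h₀, h₁⟩ s t hst
    by_cases hs : Even (plusCount s)
    · exact h₀ s hs t (by tauto)
    · exact h₁ s hs t (by tauto)

theorem Sval_le_sum_abs (x : Fin 2 → Fin 2 → ℝ) (s : Fin 2 → Fin 2 → Bool) :
    Sval x s ≤ ∑ i, ∑ j, |x i j - 1 / 4| :=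
  sum_le_sum fun i _ => sum_le_sum fun j _ => by
    split_ifs
    · rw [one_mul]; exact le_abs_self _
    · rw [neg_one_mul]; exact neg_le_abs _

theorem Sval_eq_sum_abs {x : Fin 2 → Fin 2 → ℝ} {s : Fin 2 → Fin 2 → Bool}
    (h : ∀ i j, 0 ≤ (if s i j then 1 else -1) * (x i j - 1 / 4)) :
    Sval x s = ∑ i, ∑ j, |x i j - 1 / 4| :=
  sum_congr rfl fun i _ => sum_congr rfl fun j _ => by
    have hij := h i j
    split_ifs at hij ⊢
    · rw [one_mul] at hij ⊢; exact (abs_of_nonneg hij).symm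
    · rw [neg_one_mul] at hij ⊢; exact (abs_of_nonpos (neg_nonneg.1 hij)).symm

theorem maxS0_le_one {x : Fin 2 → Fin 2 → ℝ} (hx : ∀ i j, x i j ∈ Set.Icc (0 : ℝ) (1 / 2)) :
    maxS0 x ≤ 1 := by
  have h (i j : Fin 2) : |x i j - 1 / 4| ≤ 1 / 4 :=
    abs_le.2 ⟨by linarith [(hx i j).1], by linarith [(hx i j).2]⟩
  refine maxS0_le_iff.2 fun s _ => (Sval_le_sum_abs x s).trans ?_
  simp only [Fin.sum_univ_two]
  linarith [h 0 0, h 0 1, h 1 0, h 1 1]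

def flipSign (s : Fin 2 → Fin 2 → Bool) (i₀ j₀ : Fin 2) : Fin 2 → Fin 2 → Bool :=
  fun i j => xor (s i j) (decide (i = i₀ ∧ j = j₀))

theorem even_plusCount_flipSign_iff (s : Fin 2 → Fin 2 → Bool) (i₀ j₀ : Fin 2) :
    Even (plusCount (flipSign s i₀ j₀)) ↔ ¬Even (plusCount s) := by
  revert s i₀ j₀
  decide

theorem Sval_flipSign (x : Fin 2 → Fin 2 → ℝ) (s : Fin 2 → Fin 2 → Bool) (i₀ j₀ : Fin 2) :
    Sval x (flipSign s i₀ j₀) =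
      Sval x s - 2 * ((if s i₀ j₀ then 1 else -1) * (x i₀ j₀ - 1 / 4)) := by
  have hneg (b : Bool) : (bif b then (-1 : ℝ) else 1) = -bif b then 1 else -1 := by
    cases b <;> simp
  revert i₀ j₀
  simp only [Fin.forall_fin_two, Sval, Fin.sum_univ_two, flipSign, ← Bool.cond_eq_ite,
    Fin.isValue, Fin.reduceEq, and_self, and_false, false_and, decide_true, decide_false,
    Bool.xor_true, Bool.xor_false, Bool.cond_not, hneg]
  refine ⟨⟨?_, ?_⟩, ?_, ?_⟩ <;> ring

theorem maxS0_eq_of_memS0 {x : Fin 2 → Fin 2 → ℝ} {r : ℝ} (hr : memS0 x r) (h : maxS1 x ≤ r) :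
    maxS0 x = r := by
  obtain ⟨s, hs, rfl⟩ := hr
  -- flipping one sign of `s` gives an odd choice, so it cannot raise the sum
  have hterm (i j : Fin 2) : 0 ≤ (if s i j then 1 else -1) * (x i j - 1 / 4) := by
    have := (le_maxS1 x fun h' => (even_plusCount_flipSign_iff s i j).1 h' hs).trans h
    rw [Sval_flipSign] at this
    linarith
  refine le_antisymm (maxS0_le_iff.2 fun t _ => ?_) (le_maxS0 x hs)
  rw [Sval_eq_sum_abs hterm]
  exact Sval_le_sum_abs x t

theorem Sval_const_half (s : Fin 2 → Fin 2 → Bool) :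
    Sval (fun _ _ => 1 / 2) s = plusCount s / 2 - 1 := by
  have hpt (b : Bool) :
      (if b then (1 : ℝ) else -1) * (1 / 2 - 1 / 4) = (if b then 1 else 0) / 2 - 1 / 4 := by
    cases b <;> norm_num
  simp only [Sval, hpt, sum_sub_distrib, ← sum_div, plusCount, card_filter, Fintype.sum_prod_type,
    Nat.cast_sum, Nat.cast_ite, Nat.cast_one, Nat.cast_zero, sum_const, card_univ,
    Fintype.card_fin]
  norm_num

theorem maxS1_const_half_le : maxS1 (fun _ _ => 1 / 2) ≤ 1 / 2 :=
  maxS1_le_iff.2 fun s hs => by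
    have h4 : plusCount s ≤ 4 := card_le_univ _
    have h3 : plusCount s ≤ 3 := by
      rcases h4.lt_or_eq with h | h
      · omega
      · exact absurd (h ▸ even_iff_two_dvd.2 (by norm_num)) hs
    rw [Sval_const_half]
    have : (plusCount s : ℝ) ≤ 3 := by exact_mod_cast h3
    linarith

theorem one_le_maxS0_const_half : 1 ≤ maxS0 (fun _ _ => 1 / 2) :=
  calc (1 : ℝ) = Sval (fun _ _ => 1 / 2) (fun _ _ => true) := by
        rw [Sval_const_half, show plusCount (fun _ _ => true) = 4 by decide]
        norm_num
    _ ≤ _ := le_maxS0 _ (by decide)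

noncomputable def tilt (c : ℝ) : Fin 2 → Fin 2 → ℝ := ![![1 / 4 + c, 1 / 4 + c], ![1 / 4 + c, 1 / 4]]

theorem tilt_mem_box {c : ℝ} (h0 : 0 ≤ c) (h1 : c ≤ 1 / 4) (i j : Fin 2) :
    tilt c i j ∈ Set.Icc (0 : ℝ) (1 / 2) := by
  fin_cases i <;> fin_cases j <;> constructor <;> norm_num [tilt] <;> linarith

theorem Sval_tilt_le {c : ℝ} (hc : 0 ≤ c) (s : Fin 2 → Fin 2 → Bool) : Sval (tilt c) s ≤ 3 * c :=
  (Sval_le_sum_abs _ s).trans_eq (by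
    simp only [tilt, Fin.sum_univ_two, Matrix.cons_val_zero, Matrix.cons_val_one,
      add_sub_cancel_left, sub_self, abs_zero, abs_of_nonneg hc]
    ring)

theorem maxS0_tilt_le {c : ℝ} (hc : 0 ≤ c) : maxS0 (tilt c) ≤ 3 * c :=
  maxS0_le_iff.2 fun s _ => Sval_tilt_le hc s

theorem maxS1_tilt {c : ℝ} (hc : 0 ≤ c) : maxS1 (tilt c) = 3 * c := by
  refine le_antisymm (maxS1_le_iff.2 fun s _ => Sval_tilt_le hc s) ?_
  calc 3 * c = Sval (tilt c) ![![true, true], ![true, false]] := by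
        simp only [Sval, tilt, Fin.sum_univ_two, Matrix.cons_val_zero, Matrix.cons_val_one,
          add_sub_cancel_left, sub_self, if_true, Bool.false_eq_true, if_false]
        ring
    _ ≤ _ := le_maxS1 _ (by decide)

theorem forall_box_maxS1_le_iff_iff (a b : ℝ) :
    (∀ p : Fin 2 → Fin 2 → ℝ, (∀ i j, p i j ∈ Set.Icc (0 : ℝ) (1 / 2)) →
        (maxS1 p ≤ Real.sqrt 2 / 2 ↔ maxS0 p + b ≤ 3 / 2 ∧ maxS1 p + a ≤ 3 / 2)) ↔
      a = (3 - Real.sqrt 2) / 2 ∧ b ≤ 1 / 2 := by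
  have h1 := Real.one_lt_sqrt_two
  have h32 := Real.sqrt_two_lt_three_halves
  constructor
  · intro H
    have hb : b ≤ 1 / 2 := by
      have := ((H _ fun _ _ => ⟨by norm_num, le_rfl⟩).1
        (maxS1_const_half_le.trans (by linarith))).1
      linarith [one_le_maxS0_const_half]
    refine ⟨le_antisymm ?_ ?_, hb⟩
    · have hc : 0 ≤ Real.sqrt 2 / 6 := by positivity
      have := ((H _ (tilt_mem_box hc (by linarith))).1 (by rw [maxS1_tilt hc]; linarith)).2
      rw [maxS1_tilt hc] at this
      linarith
    · -- otherwise `tilt (z / 3)` would pass the test although `max S₁ = z > √2 / 2`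
      by_contra! ha
      set z := min (3 / 4) (3 / 2 - a)
      have hz : Real.sqrt 2 / 2 < z := lt_min (by linarith) (by linarith)
      have hz₀ : 0 ≤ z / 3 := by linarith
      have := (H _ (tilt_mem_box hz₀ (by linarith [min_le_left (3 / 4) (3 / 2 - a)]))).2
        ⟨by linarith [maxS0_tilt_le hz₀, min_le_left (3 / 4) (3 / 2 - a)],
          by rw [maxS1_tilt hz₀]; linarith [min_le_right (3 / 4) (3 / 2 - a)]⟩
      rw [maxS1_tilt hz₀] at this
      linarith
  · rintro ⟨rfl, hb⟩ p hp
    have := maxS0_le_one hp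
    constructor
    · intro h
      constructor <;> linarith
    · intro h
      linarith [h.2]

/-- the Equi set for the quantum ("quant") constraint:
for every `p ∈ [0,1/2]⁴`, `max S₁p ≤ √2/2 ↔ (p, ε) ∈ ELFP`, iff
`(3 − √2)/2 ∈ S₀ε` and `max S₁ε ≤ 1/2`. -/
theorem equi_quant
    (ε : Fin 2 → Fin 2 → ℝ)
    (hε : ∀ k i, ε k i ∈ Set.Icc (0 : ℝ) (1 / 2)) :
    (∀ p : Fin 2 → Fin 2 → ℝ, (∀ i j, p i j ∈ Set.Icc (0 : ℝ) (1 / 2)) →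
        (maxS1 p ≤ Real.sqrt 2 / 2 ↔ ELFP p ε)) ↔
      (memS0 ε ((3 - Real.sqrt 2) / 2) ∧ maxS1 ε ≤ 1 / 2) := by
  have hr : 1 / 2 ≤ (3 - Real.sqrt 2) / 2 := by linarith [Real.sqrt_two_lt_three_halves]
  calc _ ↔ ∀ p : Fin 2 → Fin 2 → ℝ, (∀ i j, p i j ∈ Set.Icc (0 : ℝ) (1 / 2)) →
        (maxS1 p ≤ Real.sqrt 2 / 2 ↔ maxS0 p + maxS1 ε ≤ 3 / 2 ∧ maxS1 p + maxS0 ε ≤ 3 / 2) :=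
        forall_congr' fun p => imp_congr_right fun hp => by rw [ELFP_iff_maxS hp hε]
    _ ↔ maxS0 ε = (3 - Real.sqrt 2) / 2 ∧ maxS1 ε ≤ 1 / 2 := forall_box_maxS1_le_iff_iff _ _
    _ ↔ _ := and_congr_left fun hb =>
        ⟨fun h => h ▸ memS0_maxS0 ε, fun h => maxS0_eq_of_memS0 h (hb.trans hr)⟩
end

section
/- Let ε = (ε¹₁,ε¹₂,ε²₁,ε²₂) ∈ [0,1/2]⁴. Then the following are equivalent: (a) for every p ∈ [0,1/2]⁴ satisfying max S₁p ≤ 1/2 (the Bell/CHSH inequalities), (p, ε) ∈ ELFP; (b) max S₁ε ≤ 1/2. (This characterizes the set Fit for the classical ('class') constraint.) -/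
open Finset

def V1 : Fin 2 → Fin 2 → Bool := ![![true,true],![true,true]]
def N1 : Fin 2 → Fin 2 → Bool := ![![false,false],![false,false]]
def V2 : Fin 2 → Fin 2 → Bool := ![![true,true],![false,false]]
def N2 : Fin 2 → Fin 2 → Bool := ![![false,false],![true,true]]
def V3 : Fin 2 → Fin 2 → Bool := ![![true,false],![true,false]]
def N3 : Fin 2 → Fin 2 → Bool := ![![false,true],![false,true]]
def V4 : Fin 2 → Fin 2 → Bool := ![![true,false],![false,true]]
def N4 : Fin 2 → Fin 2 → Bool := ![![false,true],![true,false]]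

noncomputable def wgt (a1 b1 a2 b2 a3 b3 a4 b4 : ℝ) (γ : Fin 2 → Fin 2 → Bool) : ℝ :=
  (if γ = V1 then a1 else 0) + (if γ = N1 then b1 else 0) +
  (if γ = V2 then a2 else 0) + (if γ = N2 then b2 else 0) +
  (if γ = V3 then a3 else 0) + (if γ = N3 then b3 else 0) +
  (if γ = V4 then a4 else 0) + (if γ = N4 then b4 else 0)

lemma sum_wgt_mul (a1 b1 a2 b2 a3 b3 a4 b4 : ℝ) (f : (Fin 2 → Fin 2 → Bool) → ℝ) :
    ∑ γ : Fin 2 → Fin 2 → Bool, wgt a1 b1 a2 b2 a3 b3 a4 b4 γ * f γ =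
      a1 * f V1 + b1 * f N1 + a2 * f V2 + b2 * f N2 + a3 * f V3 + b3 * f N3
        + a4 * f V4 + b4 * f N4 := by
  have : ∀ γ : Fin 2 → Fin 2 → Bool, wgt a1 b1 a2 b2 a3 b3 a4 b4 γ * f γ =
      (if γ = V1 then a1 * f γ else 0) + (if γ = N1 then b1 * f γ else 0) +
      (if γ = V2 then a2 * f γ else 0) + (if γ = N2 then b2 * f γ else 0) +
      (if γ = V3 then a3 * f γ else 0) + (if γ = N3 then b3 * f γ else 0) +
      (if γ = V4 then a4 * f γ else 0) + (if γ = N4 then b4 * f γ else 0) := by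
    intro γ; simp [wgt, add_mul, ite_mul]
  rw [Finset.sum_congr rfl (fun γ _ => this γ)]
  simp [Finset.sum_add_distrib, Finset.sum_ite_eq' Finset.univ]

lemma mx1 (a : ℝ) : max a 0 + max (-a) 0 = |a| := by
  rcases le_total a 0 with h|h
  · rw [max_eq_right h, max_eq_left (by linarith), abs_of_nonpos h]; ring
  · rw [max_eq_left h, max_eq_right (by linarith), abs_of_nonneg h]; ring

lemma mx3 (a : ℝ) : max a 0 = (a + |a|)/2 := by
  rcases le_total a 0 with h|h
  · rw [max_eq_right h, abs_of_nonpos h]; ring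
  · rw [max_eq_left h, abs_of_nonneg h]; ring

lemma mx4 (a : ℝ) : max (-a) 0 = (-a + |a|)/2 := by
  rw [mx3, abs_neg]

set_option maxHeartbeats 2000000 in
lemma decomp (p : Fin 2 → Fin 2 → ℝ) (hbox : ∀ i j, p i j ∈ Set.Icc (0:ℝ) (1/2))
    (hbell : ∀ s : Fin 2 → Fin 2 → Bool, ¬ Even (plusCount s) → Sval p s ≤ 1/2) :
    ∃ w : (Fin 2 → Fin 2 → Bool) → ℝ, (∀ γ, 0 ≤ w γ) ∧
      (∑ γ : Fin 2 → Fin 2 → Bool, w γ = 1) ∧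
      (∀ γ, ¬ Even (plusCount γ) → w γ = 0) ∧
      (∀ i j, ∑ γ : Fin 2 → Fin 2 → Bool, w γ * (if γ i j then (1:ℝ) else 0) = 2 * p i j) := by
  obtain ⟨h000, h001⟩ := hbox 0 0
  obtain ⟨h010, h011⟩ := hbox 0 1
  obtain ⟨h100, h101⟩ := hbox 1 0
  obtain ⟨h110, h111⟩ := hbox 1 1
  have B1 := hbell ![![true,true],![true,false]] (by decide)
  have B2 := hbell ![![true,true],![false,true]] (by decide)
  have B3 := hbell ![![true,false],![true,true]] (by decide)
  have B4 := hbell ![![false,true],![true,true]] (by decide)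
  have B5 := hbell ![![true,false],![false,false]] (by decide)
  have B6 := hbell ![![false,true],![false,false]] (by decide)
  have B7 := hbell ![![false,false],![true,false]] (by decide)
  have B8 := hbell ![![false,false],![false,true]] (by decide)
  simp [Sval, Fin.sum_univ_two] at B1 B2 B3 B4 B5 B6 B7 B8
  set t1 := p 0 0 + p 0 1 + p 1 0 + p 1 1 - 1 with ht1
  set t2 := p 0 0 + p 0 1 - p 1 0 - p 1 1 with ht2
  set t3 := p 0 0 - p 0 1 + p 1 0 - p 1 1 with ht3
  set t4 := p 0 0 - p 0 1 - p 1 0 + p 1 1 with ht4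
  have hs : 0 ≤ 1 - (|t1| + |t2| + |t3| + |t4|) := by
    rcases abs_cases t1 with ⟨e1,_⟩|⟨e1,_⟩ <;> rcases abs_cases t2 with ⟨e2,_⟩|⟨e2,_⟩ <;>
      rcases abs_cases t3 with ⟨e3,_⟩|⟨e3,_⟩ <;> rcases abs_cases t4 with ⟨e4,_⟩|⟨e4,_⟩ <;>
      rw [e1, e2, e3, e4] <;> simp only [ht1, ht2, ht3, ht4] <;> linarith
  set ss := 1 - (|t1| + |t2| + |t3| + |t4|) with hss
  refine ⟨wgt (max t1 0 + ss/2) (max (-t1) 0 + ss/2) (max t2 0) (max (-t2) 0)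
    (max t3 0) (max (-t3) 0) (max t4 0) (max (-t4) 0), ?_, ?_, ?_, ?_⟩
  · intro γ
    unfold wgt
    have pos : ∀ (c : Prop) (_ : Decidable c) (v : ℝ), 0 ≤ v → 0 ≤ if c then v else 0 := by
      intro c _ v hv; split <;> simp [hv]
    repeat' apply add_nonneg
    all_goals apply pos
    all_goals positivity
  · have := sum_wgt_mul (max t1 0 + ss/2) (max (-t1) 0 + ss/2) (max t2 0) (max (-t2) 0)
      (max t3 0) (max (-t3) 0) (max t4 0) (max (-t4) 0) (fun _ => 1)
    simp only [mul_one] at this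
    rw [this]
    have m1 := mx1 t1; have m2 := mx1 t2; have m3 := mx1 t3; have m4 := mx1 t4
    rw [hss]; linarith
  · intro γ hγ
    have g1 : γ ≠ V1 := by rintro rfl; exact hγ (by decide)
    have g2 : γ ≠ N1 := by rintro rfl; exact hγ (by decide)
    have g3 : γ ≠ V2 := by rintro rfl; exact hγ (by decide)
    have g4 : γ ≠ N2 := by rintro rfl; exact hγ (by decide)
    have g5 : γ ≠ V3 := by rintro rfl; exact hγ (by decide)
    have g6 : γ ≠ N3 := by rintro rfl; exact hγ (by decide)
    have g7 : γ ≠ V4 := by rintro rfl; exact hγ (by decide)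
    have g8 : γ ≠ N4 := by rintro rfl; exact hγ (by decide)
    simp [wgt, g1, g2, g3, g4, g5, g6, g7, g8]
  · intro i j
    rw [sum_wgt_mul]
    have m1 := mx3 t1; have m2 := mx3 t2; have m3 := mx3 t3; have m4 := mx3 t4
    have n1 := mx4 t1; have n2 := mx4 t2; have n3 := mx4 t3; have n4 := mx4 t4
    fin_cases i <;> fin_cases j <;>
      simp only [V1, N1, V2, N2, V3, N3, V4, N4, Fin.mk_zero, Fin.mk_one, Fin.isValue,
        Matrix.cons_val_zero, Matrix.cons_val_one, Matrix.head_cons, eq_self_iff_true,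
        if_true, Bool.false_eq_true, if_false, mul_one, mul_zero] <;>
      simp only [m1, m2, m3, m4, n1, n2, n3, n4, hss, add_zero] <;>
      simp only [ht1, ht2, ht3, ht4] <;> ring

def cfg (γ δ : Fin 2 → Fin 2 → Bool) : Fin 2 → Fin 2 → Fin 2 → Bool :=
  let A := true
  let B := (A == δ 0 0)
  let C := (B == γ 0 1)
  let D := (C == δ 1 1)
  let E := (D == γ 1 1)
  let F := (E == δ 0 1)
  let G := (F == γ 1 0)
  let K := (G == δ 1 0)
  fun k i j => if k = 0 then (if i = 0 then (if j = 0 then A else B) else (if j = 0 then F else E))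
    else (if i = 0 then (if j = 0 then K else C) else (if j = 0 then G else D))

def ncfg (γ δ : Fin 2 → Fin 2 → Bool) : Fin 2 → Fin 2 → Fin 2 → Bool :=
  fun k i j => !(cfg γ δ k i j)

set_option maxRecDepth 10000 in
lemma cfg_edges : ∀ γ δ : Fin 2 → Fin 2 → Bool, Even (plusCount γ) → Even (plusCount δ) →
    (∀ i j, (cfg γ δ 0 i j == cfg γ δ 1 i j) = γ i j) ∧
    (∀ i, (cfg γ δ 0 i 0 == cfg γ δ 0 i 1) = δ 0 i) ∧
    (∀ j, (cfg γ δ 1 0 j == cfg γ δ 1 1 j) = δ 1 j) := by decide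

noncomputable def nu (γ δ : Fin 2 → Fin 2 → Bool) (h : Fin 2 → Fin 2 → Fin 2 → Bool) : ℝ :=
  (if h = cfg γ δ then 1/2 else 0) + (if h = ncfg γ δ then 1/2 else 0)

lemma nu_nonneg (γ δ h) : 0 ≤ nu γ δ h := by
  unfold nu; split <;> split <;> norm_num

lemma sum_filter_nu (P : (Fin 2 → Fin 2 → Fin 2 → Bool) → Prop) [DecidablePred P] (γ δ) :
    ∑ h ∈ Finset.univ.filter P, nu γ δ h
      = (if P (cfg γ δ) then (1:ℝ)/2 else 0) + (if P (ncfg γ δ) then (1:ℝ)/2 else 0) := by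
  unfold nu
  rw [Finset.sum_add_distrib,
    Finset.sum_ite_eq' (Finset.univ.filter P) (cfg γ δ) (fun _ => (1:ℝ)/2),
    Finset.sum_ite_eq' (Finset.univ.filter P) (ncfg γ δ) (fun _ => (1:ℝ)/2)]
  simp [Finset.mem_filter]

lemma sum_nu (γ δ) : ∑ h : Fin 2 → Fin 2 → Fin 2 → Bool, nu γ δ h = 1 := by
  unfold nu
  rw [Finset.sum_add_distrib,
    Finset.sum_ite_eq' Finset.univ (cfg γ δ) (fun _ => (1:ℝ)/2),
    Finset.sum_ite_eq' Finset.univ (ncfg γ δ) (fun _ => (1:ℝ)/2)]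
  norm_num

lemma filter_sum_mu (w u : (Fin 2 → Fin 2 → Bool) → ℝ)
    (P : (Fin 2 → Fin 2 → Fin 2 → Bool) → Prop) [DecidablePred P] :
    ∑ h ∈ Finset.univ.filter P, (∑ γ : Fin 2 → Fin 2 → Bool, ∑ δ : Fin 2 → Fin 2 → Bool,
        w γ * u δ * nu γ δ h)
      = ∑ γ : Fin 2 → Fin 2 → Bool, ∑ δ : Fin 2 → Fin 2 → Bool,
          w γ * u δ * ∑ h ∈ Finset.univ.filter P, nu γ δ h := by
  rw [Finset.sum_comm]
  refine Finset.sum_congr rfl fun γ _ => ?_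
  rw [Finset.sum_comm]
  exact Finset.sum_congr rfl fun δ _ => (Finset.mul_sum _ _ _).symm

lemma collapse_l (w u : (Fin 2 → Fin 2 → Bool) → ℝ)
    (hu1 : ∑ δ : Fin 2 → Fin 2 → Bool, u δ = 1) (c : (Fin 2 → Fin 2 → Bool) → ℝ) :
    ∑ γ : Fin 2 → Fin 2 → Bool, ∑ δ : Fin 2 → Fin 2 → Bool, w γ * u δ * c γ
      = ∑ γ : Fin 2 → Fin 2 → Bool, w γ * c γ := by
  refine Finset.sum_congr rfl fun γ _ => ?_
  calc ∑ δ : Fin 2 → Fin 2 → Bool, w γ * u δ * c γ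
      = (w γ * c γ) * ∑ δ : Fin 2 → Fin 2 → Bool, u δ := by
        rw [Finset.mul_sum]; exact Finset.sum_congr rfl fun δ _ => by ring
    _ = w γ * c γ := by rw [hu1, mul_one]

lemma collapse_r (w u : (Fin 2 → Fin 2 → Bool) → ℝ)
    (hw1 : ∑ γ : Fin 2 → Fin 2 → Bool, w γ = 1) (c : (Fin 2 → Fin 2 → Bool) → ℝ) :
    ∑ γ : Fin 2 → Fin 2 → Bool, ∑ δ : Fin 2 → Fin 2 → Bool, w γ * u δ * c δ
      = ∑ δ : Fin 2 → Fin 2 → Bool, u δ * c δ := by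
  rw [Finset.sum_comm]
  refine Finset.sum_congr rfl fun δ _ => ?_
  calc ∑ γ : Fin 2 → Fin 2 → Bool, w γ * u δ * c δ
      = (u δ * c δ) * ∑ γ : Fin 2 → Fin 2 → Bool, w γ := by
        rw [Finset.mul_sum]; exact Finset.sum_congr rfl fun γ _ => by ring
    _ = u δ * c δ := by rw [hw1, mul_one]

lemma half_ind (w : (Fin 2 → Fin 2 → Bool) → ℝ) (q : (Fin 2 → Fin 2 → Bool) → Bool) :
    ∑ γ : Fin 2 → Fin 2 → Bool, w γ * (if q γ then (1:ℝ)/2 else 0)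
      = (∑ γ : Fin 2 → Fin 2 → Bool, w γ * (if q γ then (1:ℝ) else 0)) / 2 := by
  rw [Finset.sum_div]
  refine Finset.sum_congr rfl fun γ _ => ?_
  split <;> ring


lemma elfp_construct (p ε : Fin 2 → Fin 2 → ℝ)
    (hp : ∀ i j, p i j ∈ Set.Icc (0:ℝ) (1/2))
    (hbp : ∀ s, ¬Even (plusCount s) → Sval p s ≤ 1/2)
    (hε : ∀ k i, ε k i ∈ Set.Icc (0:ℝ) (1/2))
    (hbe : ∀ s, ¬Even (plusCount s) → Sval ε s ≤ 1/2) : ELFP p ε := by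
  obtain ⟨w, hw0, hw1, hwodd, hwm⟩ := decomp p hp hbp
  obtain ⟨u, hu0, hu1, huodd, hum⟩ := decomp ε (fun i j => hε i j) hbe
  refine ⟨fun h => ∑ γ : Fin 2 → Fin 2 → Bool, ∑ δ : Fin 2 → Fin 2 → Bool,
    w γ * u δ * nu γ δ h, ?_, ?_, ?_, ?_, ?_, ?_⟩
  · intro h
    exact Finset.sum_nonneg fun γ _ => Finset.sum_nonneg fun δ _ =>
      mul_nonneg (mul_nonneg (hw0 γ) (hu0 δ)) (nu_nonneg _ _ _)
  · -- total mass
    rw [Finset.sum_comm]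
    rw [Finset.sum_congr rfl fun γ _ => Finset.sum_comm]
    rw [Finset.sum_congr rfl fun (γ : Fin 2 → Fin 2 → Bool) _ =>
      Finset.sum_congr rfl fun (δ : Fin 2 → Fin 2 → Bool) _ =>
        ((Finset.mul_sum _ _ _).symm.trans (by rw [sum_nu]))]
    rw [collapse_l w u hu1 (fun _ => (1:ℝ))]
    simp only [mul_one]; exact hw1
  · -- marginals
    intro k i j
    rw [filter_sum_mu w u (fun h => h k i j = true)]
    have key : ∀ γ δ : Fin 2 → Fin 2 → Bool,
        w γ * u δ * (∑ h ∈ Finset.univ.filter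
          (fun h : Fin 2 → Fin 2 → Fin 2 → Bool => h k i j = true), nu γ δ h)
        = w γ * u δ * ((1:ℝ)/2) := by
      intro γ δ
      rw [sum_filter_nu (fun h => h k i j = true) γ δ]
      congr 1
      cases hc : cfg γ δ k i j <;> simp [ncfg, hc]
    rw [Finset.sum_congr rfl fun γ _ => Finset.sum_congr rfl fun δ _ => key γ δ]
    rw [collapse_l w u hu1 (fun _ => (1:ℝ)/2), ← Finset.sum_mul, hw1, one_mul]
  · -- pair p
    intro i j
    rw [filter_sum_mu w u (fun h => h 0 i j = true ∧ h 1 i j = true)]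
    have key : ∀ γ δ : Fin 2 → Fin 2 → Bool,
        w γ * u δ * (∑ h ∈ Finset.univ.filter
          (fun h : Fin 2 → Fin 2 → Fin 2 → Bool => h 0 i j = true ∧ h 1 i j = true), nu γ δ h)
        = w γ * u δ * (if γ i j then (1:ℝ)/2 else 0) := by
      intro γ δ
      by_cases hγ0 : w γ = 0
      · rw [hγ0]; ring
      by_cases hδ0 : u δ = 0
      · rw [hδ0]; ring
      have hγe : Even (plusCount γ) := by by_contra hh; exact hγ0 (hwodd γ hh)
      have hδe : Even (plusCount δ) := by by_contra hh; exact hδ0 (huodd δ hh)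
      have e := (cfg_edges γ δ hγe hδe).1 i j
      rw [sum_filter_nu (fun h => h 0 i j = true ∧ h 1 i j = true) γ δ]
      congr 1
      cases hc0 : cfg γ δ 0 i j <;> cases hc1 : cfg γ δ 1 i j <;>
        rw [hc0, hc1] at e <;> simp at e <;> simp [ncfg, hc0, hc1, e]
    rw [Finset.sum_congr rfl fun γ _ => Finset.sum_congr rfl fun δ _ => key γ δ]
    rw [collapse_l w u hu1 (fun γ => if γ i j then (1:ℝ)/2 else 0)]
    rw [half_ind w (fun γ => γ i j), hwm i j]; ring
  · -- eps 0 i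
    intro i
    rw [filter_sum_mu w u (fun h => h 0 i 0 = true ∧ h 0 i 1 = true)]
    have key : ∀ γ δ : Fin 2 → Fin 2 → Bool,
        w γ * u δ * (∑ h ∈ Finset.univ.filter
          (fun h : Fin 2 → Fin 2 → Fin 2 → Bool => h 0 i 0 = true ∧ h 0 i 1 = true), nu γ δ h)
        = w γ * u δ * (if δ 0 i then (1:ℝ)/2 else 0) := by
      intro γ δ
      by_cases hγ0 : w γ = 0
      · rw [hγ0]; ring
      by_cases hδ0 : u δ = 0
      · rw [hδ0]; ring
      have hγe : Even (plusCount γ) := by by_contra hh; exact hγ0 (hwodd γ hh)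
      have hδe : Even (plusCount δ) := by by_contra hh; exact hδ0 (huodd δ hh)
      have e := (cfg_edges γ δ hγe hδe).2.1 i
      rw [sum_filter_nu (fun h => h 0 i 0 = true ∧ h 0 i 1 = true) γ δ]
      congr 1
      cases hc0 : cfg γ δ 0 i 0 <;> cases hc1 : cfg γ δ 0 i 1 <;>
        rw [hc0, hc1] at e <;> simp at e <;> simp [ncfg, hc0, hc1, e]
    rw [Finset.sum_congr rfl fun γ _ => Finset.sum_congr rfl fun δ _ => key γ δ]
    rw [collapse_r w u hw1 (fun δ => if δ 0 i then (1:ℝ)/2 else 0)]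
    rw [half_ind u (fun δ => δ 0 i), hum 0 i]; ring
  · -- eps 1 j
    intro j
    rw [filter_sum_mu w u (fun h => h 1 0 j = true ∧ h 1 1 j = true)]
    have key : ∀ γ δ : Fin 2 → Fin 2 → Bool,
        w γ * u δ * (∑ h ∈ Finset.univ.filter
          (fun h : Fin 2 → Fin 2 → Fin 2 → Bool => h 1 0 j = true ∧ h 1 1 j = true), nu γ δ h)
        = w γ * u δ * (if δ 1 j then (1:ℝ)/2 else 0) := by
      intro γ δ
      by_cases hγ0 : w γ = 0
      · rw [hγ0]; ring
      by_cases hδ0 : u δ = 0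
      · rw [hδ0]; ring
      have hγe : Even (plusCount γ) := by by_contra hh; exact hγ0 (hwodd γ hh)
      have hδe : Even (plusCount δ) := by by_contra hh; exact hδ0 (huodd δ hh)
      have e := (cfg_edges γ δ hγe hδe).2.2 j
      rw [sum_filter_nu (fun h => h 1 0 j = true ∧ h 1 1 j = true) γ δ]
      congr 1
      cases hc0 : cfg γ δ 1 0 j <;> cases hc1 : cfg γ δ 1 1 j <;>
        rw [hc0, hc1] at e <;> simp at e <;> simp [ncfg, hc0, hc1, e]
    rw [Finset.sum_congr rfl fun γ _ => Finset.sum_congr rfl fun δ _ => key γ δ]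
    rw [collapse_r w u hw1 (fun δ => if δ 1 j then (1:ℝ)/2 else 0)]
    rw [half_ind u (fun δ => δ 1 j), hum 1 j]; ring

lemma odd_sgn_sum (s : Fin 2 → Fin 2 → Bool) (hs : ¬ Even (plusCount s)) :
    (if s 0 0 then (1:ℤ) else -1) + (if s 0 1 then 1 else -1)
      + (if s 1 0 then 1 else -1) + (if s 1 1 then 1 else -1) ≤ 2 := by
  revert hs; revert s; decide

set_option maxRecDepth 10000 in
lemma ptw (s b : Fin 2 → Fin 2 → Bool) (hs : ¬ Even (plusCount s)) :
    (if s 0 0 then (1:ℤ) else -1) * ((if b 0 0 then 1 else -1) * (if b 0 1 then 1 else -1))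
  + (if s 0 1 then (1:ℤ) else -1) * ((if b 1 0 then 1 else -1) * (if b 1 1 then 1 else -1))
  + (if s 1 0 then (1:ℤ) else -1) * ((if b 0 0 then 1 else -1) * (if b 1 0 then 1 else -1))
  + (if s 1 1 then (1:ℤ) else -1) * ((if b 0 1 then 1 else -1) * (if b 1 1 then 1 else -1))
    ≤ 2 := by
  revert hs; revert s b; decide

lemma bridge (c d1 d2 : Bool) :
    (if c then (1:ℝ) else -1) * ((if d1 then (1:ℝ) else -1) * (if d2 then (1:ℝ) else -1) / 4)
      = (((if c then (1:ℤ) else -1) * ((if d1 then 1 else -1) * (if d2 then 1 else -1)) : ℤ) : ℝ)/4 := by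
  cases c <;> cases d1 <;> cases d2 <;> norm_num

lemma edge_avg (μ : (Fin 2 → Fin 2 → Fin 2 → Bool) → ℝ)
    (a b : (Fin 2 → Fin 2 → Fin 2 → Bool) → Bool) (v : ℝ)
    (T : ∑ h : Fin 2 → Fin 2 → Fin 2 → Bool, μ h = 1)
    (ma : ∑ h : Fin 2 → Fin 2 → Fin 2 → Bool, (if a h = true then μ h else 0) = 1/2)
    (mb : ∑ h : Fin 2 → Fin 2 → Fin 2 → Bool, (if b h = true then μ h else 0) = 1/2)
    (e : ∑ h : Fin 2 → Fin 2 → Fin 2 → Bool, (if (a h = true ∧ b h = true) then μ h else 0) = v) :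
    ∑ h : Fin 2 → Fin 2 → Fin 2 → Bool,
      μ h * ((if a h then (1:ℝ) else -1) * (if b h then (1:ℝ) else -1) / 4) = v - 1/4 := by
  have pt : ∀ h : Fin 2 → Fin 2 → Fin 2 → Bool,
      μ h * ((if a h then (1:ℝ) else -1) * (if b h then (1:ℝ) else -1) / 4)
      = (if (a h = true ∧ b h = true) then μ h else 0)
        - (1/2) * (if a h = true then μ h else 0)
        - (1/2) * (if b h = true then μ h else 0) + μ h / 4 := by
    intro h
    by_cases ha : a h = true <;> by_cases hb : b h = true <;>
      simp only [ha, hb, if_true, if_false, and_true, and_false, true_and, false_and,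
        if_pos, eq_self_iff_true] <;> simp [ha, hb] <;> ring
  rw [Finset.sum_congr rfl fun h _ => pt h]
  rw [Finset.sum_add_distrib, Finset.sum_sub_distrib, Finset.sum_sub_distrib,
    ← Finset.mul_sum, ← Finset.mul_sum, e, ma, mb, ← Finset.sum_div, T]
  ring

lemma forward_core (ε : Fin 2 → Fin 2 → ℝ)
    (μ : (Fin 2 → Fin 2 → Fin 2 → Bool) → ℝ)
    (h0 : ∀ h, 0 ≤ μ h)
    (h1 : ∑ h : Fin 2 → Fin 2 → Fin 2 → Bool, μ h = 1)
    (hm : ∀ k i j : Fin 2,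
      ∑ h ∈ Finset.univ.filter
          (fun h : Fin 2 → Fin 2 → Fin 2 → Bool => h k i j = true), μ h = 1 / 2)
    (hpp : ∀ i j : Fin 2,
      ∑ h ∈ Finset.univ.filter
          (fun h : Fin 2 → Fin 2 → Fin 2 → Bool => h 0 i j = true ∧ h 1 i j = true), μ h
        = 1 / 2)
    (he0 : ∀ i : Fin 2,
      ∑ h ∈ Finset.univ.filter
          (fun h : Fin 2 → Fin 2 → Fin 2 → Bool => h 0 i 0 = true ∧ h 0 i 1 = true), μ h
        = ε 0 i)
    (he1 : ∀ j : Fin 2,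
      ∑ h ∈ Finset.univ.filter
          (fun h : Fin 2 → Fin 2 → Fin 2 → Bool => h 1 0 j = true ∧ h 1 1 j = true), μ h
        = ε 1 j)
    (s : Fin 2 → Fin 2 → Bool) (hs : ¬ Even (plusCount s)) :
    Sval ε s ≤ 1/2 := by
  classical
  -- support: μ vanishes off the diagonal h 0 = h 1
  have hsupp : ∀ h : Fin 2 → Fin 2 → Fin 2 → Bool, μ h ≠ 0 → ∀ i j, h 0 i j = h 1 i j := by
    have key : ∀ i j : Fin 2, ∀ h : Fin 2 → Fin 2 → Fin 2 → Bool,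
        h 0 i j ≠ h 1 i j → μ h = 0 := by
      intro i j
      have D1 : ∑ h ∈ Finset.univ.filter
            (fun h : Fin 2 → Fin 2 → Fin 2 → Bool => h 0 i j = true ∧ h 1 i j = true), μ h
          + ∑ h ∈ Finset.univ.filter
            (fun h : Fin 2 → Fin 2 → Fin 2 → Bool => h 0 i j = true ∧ ¬ h 1 i j = true), μ h
          = ∑ h ∈ Finset.univ.filter
            (fun h : Fin 2 → Fin 2 → Fin 2 → Bool => h 0 i j = true), μ h := by
        rw [← Finset.filter_filter, ← Finset.filter_filter]
        exact Finset.sum_filter_add_sum_filter_not _ _ _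
      have D2 : ∑ h ∈ Finset.univ.filter
            (fun h : Fin 2 → Fin 2 → Fin 2 → Bool => h 1 i j = true ∧ h 0 i j = true), μ h
          + ∑ h ∈ Finset.univ.filter
            (fun h : Fin 2 → Fin 2 → Fin 2 → Bool => h 1 i j = true ∧ ¬ h 0 i j = true), μ h
          = ∑ h ∈ Finset.univ.filter
            (fun h : Fin 2 → Fin 2 → Fin 2 → Bool => h 1 i j = true), μ h := by
        rw [← Finset.filter_filter, ← Finset.filter_filter]
        exact Finset.sum_filter_add_sum_filter_not _ _ _
      have hcomm : Finset.univ.filter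
            (fun h : Fin 2 → Fin 2 → Fin 2 → Bool => h 1 i j = true ∧ h 0 i j = true)
          = Finset.univ.filter
            (fun h : Fin 2 → Fin 2 → Fin 2 → Bool => h 0 i j = true ∧ h 1 i j = true) := by
        ext h; simp [and_comm]
      rw [hcomm] at D2
      have Z1 : ∑ h ∈ Finset.univ.filter
            (fun h : Fin 2 → Fin 2 → Fin 2 → Bool => h 0 i j = true ∧ ¬ h 1 i j = true), μ h
          = 0 := by
        have := hm 0 i j; have := hpp i j; linarith
      have Z2 : ∑ h ∈ Finset.univ.filter
            (fun h : Fin 2 → Fin 2 → Fin 2 → Bool => h 1 i j = true ∧ ¬ h 0 i j = true), μ h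
          = 0 := by
        have := hm 1 i j; have := hpp i j; linarith
      intro h hne
      cases hb0 : h 0 i j <;> cases hb1 : h 1 i j
      · exact absurd (hb0.trans hb1.symm) hne
      · exact (Finset.sum_eq_zero_iff_of_nonneg (fun h _ => h0 h)).mp Z2 h
          (Finset.mem_filter.mpr ⟨Finset.mem_univ h, hb1, by simp [hb0]⟩)
      · exact (Finset.sum_eq_zero_iff_of_nonneg (fun h _ => h0 h)).mp Z1 h
          (Finset.mem_filter.mpr ⟨Finset.mem_univ h, hb0, by simp [hb1]⟩)
      · exact absurd (hb0.trans hb1.symm) hne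
    intro h hne i j
    by_contra hne2
    exact hne (key i j h hne2)
  -- the four edge averages
  have marg : ∀ k i j : Fin 2,
      ∑ h : Fin 2 → Fin 2 → Fin 2 → Bool, (if h k i j = true then μ h else 0) = 1/2 := by
    intro k i j; rw [← Finset.sum_filter]; exact hm k i j
  have E1 : ∑ h : Fin 2 → Fin 2 → Fin 2 → Bool,
      μ h * ((if h 0 0 0 then (1:ℝ) else -1) * (if h 0 0 1 then (1:ℝ) else -1) / 4)
      = ε 0 0 - 1/4 :=
    edge_avg μ (fun h => h 0 0 0) (fun h => h 0 0 1) (ε 0 0) h1 (marg 0 0 0) (marg 0 0 1)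
      (by rw [← Finset.sum_filter]; exact he0 0)
  have E2 : ∑ h : Fin 2 → Fin 2 → Fin 2 → Bool,
      μ h * ((if h 0 1 0 then (1:ℝ) else -1) * (if h 0 1 1 then (1:ℝ) else -1) / 4)
      = ε 0 1 - 1/4 :=
    edge_avg μ (fun h => h 0 1 0) (fun h => h 0 1 1) (ε 0 1) h1 (marg 0 1 0) (marg 0 1 1)
      (by rw [← Finset.sum_filter]; exact he0 1)
  have E3 : ∑ h : Fin 2 → Fin 2 → Fin 2 → Bool,
      μ h * ((if h 1 0 0 then (1:ℝ) else -1) * (if h 1 1 0 then (1:ℝ) else -1) / 4)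
      = ε 1 0 - 1/4 :=
    edge_avg μ (fun h => h 1 0 0) (fun h => h 1 1 0) (ε 1 0) h1 (marg 1 0 0) (marg 1 1 0)
      (by rw [← Finset.sum_filter]; exact he1 0)
  have E4 : ∑ h : Fin 2 → Fin 2 → Fin 2 → Bool,
      μ h * ((if h 1 0 1 then (1:ℝ) else -1) * (if h 1 1 1 then (1:ℝ) else -1) / 4)
      = ε 1 1 - 1/4 :=
    edge_avg μ (fun h => h 1 0 1) (fun h => h 1 1 1) (ε 1 1) h1 (marg 1 0 1) (marg 1 1 1)
      (by rw [← Finset.sum_filter]; exact he1 1)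
  -- G and the key identity
  have key : Sval ε s = ∑ h : Fin 2 → Fin 2 → Fin 2 → Bool, μ h *
      ((if s 0 0 then (1:ℝ) else -1) * ((if h 0 0 0 then (1:ℝ) else -1) * (if h 0 0 1 then (1:ℝ) else -1) / 4)
      + (if s 0 1 then (1:ℝ) else -1) * ((if h 0 1 0 then (1:ℝ) else -1) * (if h 0 1 1 then (1:ℝ) else -1) / 4)
      + (if s 1 0 then (1:ℝ) else -1) * ((if h 1 0 0 then (1:ℝ) else -1) * (if h 1 1 0 then (1:ℝ) else -1) / 4)
      + (if s 1 1 then (1:ℝ) else -1) * ((if h 1 0 1 then (1:ℝ) else -1) * (if h 1 1 1 then (1:ℝ) else -1) / 4)) := by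
    have expand : ∀ h : Fin 2 → Fin 2 → Fin 2 → Bool, μ h *
        ((if s 0 0 then (1:ℝ) else -1) * ((if h 0 0 0 then (1:ℝ) else -1) * (if h 0 0 1 then (1:ℝ) else -1) / 4)
        + (if s 0 1 then (1:ℝ) else -1) * ((if h 0 1 0 then (1:ℝ) else -1) * (if h 0 1 1 then (1:ℝ) else -1) / 4)
        + (if s 1 0 then (1:ℝ) else -1) * ((if h 1 0 0 then (1:ℝ) else -1) * (if h 1 1 0 then (1:ℝ) else -1) / 4)
        + (if s 1 1 then (1:ℝ) else -1) * ((if h 1 0 1 then (1:ℝ) else -1) * (if h 1 1 1 then (1:ℝ) else -1) / 4))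
        = (if s 0 0 then (1:ℝ) else -1) * (μ h * ((if h 0 0 0 then (1:ℝ) else -1) * (if h 0 0 1 then (1:ℝ) else -1) / 4))
        + (if s 0 1 then (1:ℝ) else -1) * (μ h * ((if h 0 1 0 then (1:ℝ) else -1) * (if h 0 1 1 then (1:ℝ) else -1) / 4))
        + (if s 1 0 then (1:ℝ) else -1) * (μ h * ((if h 1 0 0 then (1:ℝ) else -1) * (if h 1 1 0 then (1:ℝ) else -1) / 4))
        + (if s 1 1 then (1:ℝ) else -1) * (μ h * ((if h 1 0 1 then (1:ℝ) else -1) * (if h 1 1 1 then (1:ℝ) else -1) / 4)) :=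
      fun h => by ring
    rw [Finset.sum_congr rfl fun h _ => expand h]
    rw [Finset.sum_add_distrib, Finset.sum_add_distrib, Finset.sum_add_distrib,
      ← Finset.mul_sum, ← Finset.mul_sum, ← Finset.mul_sum, ← Finset.mul_sum,
      E1, E2, E3, E4]
    simp [Sval, Fin.sum_univ_two]
    ring
  rw [key]
  -- pointwise bound on the support
  have bound : ∀ h : Fin 2 → Fin 2 → Fin 2 → Bool, μ h *
      ((if s 0 0 then (1:ℝ) else -1) * ((if h 0 0 0 then (1:ℝ) else -1) * (if h 0 0 1 then (1:ℝ) else -1) / 4)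
      + (if s 0 1 then (1:ℝ) else -1) * ((if h 0 1 0 then (1:ℝ) else -1) * (if h 0 1 1 then (1:ℝ) else -1) / 4)
      + (if s 1 0 then (1:ℝ) else -1) * ((if h 1 0 0 then (1:ℝ) else -1) * (if h 1 1 0 then (1:ℝ) else -1) / 4)
      + (if s 1 1 then (1:ℝ) else -1) * ((if h 1 0 1 then (1:ℝ) else -1) * (if h 1 1 1 then (1:ℝ) else -1) / 4))
      ≤ μ h * (1/2) := by
    intro h
    rcases eq_or_ne (μ h) 0 with hz | hnz
    · rw [hz]; simp
    · refine mul_le_mul_of_nonneg_left ?_ (h0 h)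
      have heq := hsupp h hnz
      rw [← heq 0 0, ← heq 0 1, ← heq 1 0, ← heq 1 1]
      rw [bridge (s 0 0) (h 0 0 0) (h 0 0 1), bridge (s 0 1) (h 0 1 0) (h 0 1 1),
        bridge (s 1 0) (h 0 0 0) (h 0 1 0), bridge (s 1 1) (h 0 0 1) (h 0 1 1)]
      have hz2 := ptw s (h 0) hs
      have hc : (((if s 0 0 then (1:ℤ) else -1) * ((if h 0 0 0 then 1 else -1) * (if h 0 0 1 then 1 else -1))
          + (if s 0 1 then (1:ℤ) else -1) * ((if h 0 1 0 then 1 else -1) * (if h 0 1 1 then 1 else -1))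
          + (if s 1 0 then (1:ℤ) else -1) * ((if h 0 0 0 then 1 else -1) * (if h 0 1 0 then 1 else -1))
          + (if s 1 1 then (1:ℤ) else -1) * ((if h 0 0 1 then 1 else -1) * (if h 0 1 1 then 1 else -1)) : ℤ) : ℝ) ≤ 2 := by
        exact_mod_cast hz2
      push_cast at hc ⊢
      linarith
  calc ∑ h : Fin 2 → Fin 2 → Fin 2 → Bool, μ h *
      ((if s 0 0 then (1:ℝ) else -1) * ((if h 0 0 0 then (1:ℝ) else -1) * (if h 0 0 1 then (1:ℝ) else -1) / 4)
      + (if s 0 1 then (1:ℝ) else -1) * ((if h 0 1 0 then (1:ℝ) else -1) * (if h 0 1 1 then (1:ℝ) else -1) / 4)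
      + (if s 1 0 then (1:ℝ) else -1) * ((if h 1 0 0 then (1:ℝ) else -1) * (if h 1 1 0 then (1:ℝ) else -1) / 4)
      + (if s 1 1 then (1:ℝ) else -1) * ((if h 1 0 1 then (1:ℝ) else -1) * (if h 1 1 1 then (1:ℝ) else -1) / 4))
      ≤ ∑ h : Fin 2 → Fin 2 → Fin 2 → Bool, μ h * (1/2) :=
        Finset.sum_le_sum fun h _ => bound h
    _ = 1/2 := by rw [← Finset.sum_mul, h1, one_mul]

lemma bell_of_maxS1 (x : Fin 2 → Fin 2 → ℝ) (hx : maxS1 x ≤ 1/2) :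
    ∀ s, ¬ Even (plusCount s) → Sval x s ≤ 1/2 := by
  intro s hs
  refine le_trans ?_ hx
  unfold maxS1
  exact Finset.le_sup' (Sval x) (Finset.mem_filter.mpr ⟨Finset.mem_univ s, hs⟩)

lemma bell_const_half : maxS1 (fun _ _ => (1:ℝ)/2) ≤ 1/2 := by
  unfold maxS1
  apply Finset.sup'_le
  intro s hs
  have hodd := (Finset.mem_filter.mp hs).2
  have hz := odd_sgn_sum s hodd
  have hSv : Sval (fun _ _ => (1:ℝ)/2) s
      = (((if s 0 0 then (1:ℤ) else -1) + (if s 0 1 then 1 else -1)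
          + (if s 1 0 then 1 else -1) + (if s 1 1 then 1 else -1) : ℤ) : ℝ)/4 := by
    have hc : ∀ c : Bool, (if c then (1:ℝ) else -1) * ((1:ℝ)/2 - 1/4)
        = ((if c then (1:ℤ) else -1 : ℤ) : ℝ)/4 := by
      intro c; cases c <;> norm_num
    simp only [Sval, Fin.sum_univ_two]
    rw [hc, hc, hc, hc]
    push_cast
    ring
  rw [hSv]
  rw [div_le_iff₀ (by norm_num : (0:ℝ) < 4)]
  have : (((if s 0 0 then (1:ℤ) else -1) + (if s 0 1 then 1 else -1)
      + (if s 1 0 then 1 else -1) + (if s 1 1 then 1 else -1) : ℤ) : ℝ) ≤ 2 := by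
    exact_mod_cast hz
  linarith

/-- the Fit set for the classical ("class") constraint:
`ε` is compatible with every `p ∈ [0,1/2]⁴` satisfying the Bell/CHSH inequalities
(`max S₁p ≤ 1/2`) iff `max S₁ε ≤ 1/2`. -/
theorem fit_class
    (ε : Fin 2 → Fin 2 → ℝ)
    (hε : ∀ k i, ε k i ∈ Set.Icc (0 : ℝ) (1 / 2)) :
    (∀ p : Fin 2 → Fin 2 → ℝ, (∀ i j, p i j ∈ Set.Icc (0 : ℝ) (1 / 2)) →
        maxS1 p ≤ 1 / 2 → ELFP p ε) ↔
      maxS1 ε ≤ 1 / 2 := by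
  constructor
  · intro H
    obtain ⟨μ, m0, m1, m2, m3, m4, m5⟩ := H (fun _ _ => (1:ℝ)/2)
      (fun i j => ⟨by norm_num, by norm_num⟩) bell_const_half
    unfold maxS1
    apply Finset.sup'_le
    intro s hs
    exact forward_core ε μ m0 m1 m2 (fun i j => by simpa using m3 i j) m4 m5 s
      (Finset.mem_filter.mp hs).2
  · intro hb p hpbox hpbell
    exact elfp_construct p ε hpbox (bell_of_maxS1 p hpbell) (fun k i => hε k i)
      (bell_of_maxS1 ε hb)
end
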